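/- For an irrational real number x ≠ 0, the exponential type satisfies B_sup(x) = |x| · B_sup(1/x), where B_sup(x) is the limsup over positive integers q of log(1/dist(qx,ℤ))/q, valued in [0,+∞] (with the convention ∞·c = ∞ for c > 0). -/

import Mathlib

open Filter
open scoped ENNReal

/-- Distance from a real number to the nearest integer. -/
noncomputable def distZ (y : ℝ) : ℝ := |y - round y|

/-- The exponential type of `x`: `limsup_{q→∞} log(1/dist(qx,ℤ))/q`, valued in `[0,∞]`. -/
noncomputable def Bsup (x : ℝ) : ℝ≥0∞ :=
  Filter.limsup (fun q : ℕ => ENNReal.ofReal (Real.log (distZ ((q : ℝ) * x))⁻¹ / (q : ℝ)))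
    Filter.atTop

/-!
If `p` is the integer nearest to `q x`, then `n = |p|` satisfies
`dist(n/x, ℤ) ≤ |p/x - q| = dist(qx, ℤ)/|x|` and `n ≤ q|x| + 1/2`, with `n → ∞` as `q → ∞`.
Hence `log(1/dist(qx, ℤ)) ≤ log(1/|x|) + G n` as soon as `log(1/dist(n/x, ℤ)) ≤ G n`, which gives
`B_sup(x) ≤ |x| G` for every `G > B_sup(1/x)`. Applying this to `x` and to `1/x` yields the two
inequalities.
-/

open Real

lemma distZ_le_abs_sub_intCast (y : ℝ) (m : ℤ) : distZ y ≤ |y - m| :=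
  round_le y m

lemma distZ_neg (y : ℝ) : distZ (-y) = distZ y := by
  refine le_antisymm ?_ ?_
  · calc distZ (-y) ≤ |-y - ((-round y : ℤ) : ℝ)| := distZ_le_abs_sub_intCast _ _
      _ = distZ y := by rw [distZ, ← abs_neg]; push_cast; ring_nf
  · calc distZ y ≤ |y - ((-round (-y) : ℤ) : ℝ)| := distZ_le_abs_sub_intCast _ _
      _ = distZ (-y) := by rw [distZ, ← abs_neg]; push_cast; ring_nf

lemma distZ_natAbs_mul (m : ℤ) (y : ℝ) : distZ (m.natAbs * y) = distZ (m * y) := by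
  rcases Int.natAbs_eq m with h | h
  · rw [h, Int.natAbs_natCast, Int.cast_natCast]
  · conv_rhs => rw [h]
    rw [Int.cast_neg, Int.cast_natCast, neg_mul, distZ_neg]

lemma Irrational.distZ_pos {y : ℝ} (hy : Irrational y) : 0 < distZ y :=
  abs_pos.mpr (sub_ne_zero.mpr (hy.ne_int _))

lemma abs_sub_half_le_natAbs_round (y : ℝ) : |y| - 1 / 2 ≤ (round y).natAbs := by
  have := abs_sub_abs_le_abs_sub y (round y)
  have := abs_sub_round y
  rw [Nat.cast_natAbs, Int.cast_abs]
  linarith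

lemma natAbs_round_le_abs_add_half (y : ℝ) : ((round y).natAbs : ℝ) ≤ |y| + 1 / 2 := by
  have h := abs_sub_abs_le_abs_sub (round y : ℝ) y
  rw [abs_sub_comm] at h
  have := abs_sub_round y
  rw [Nat.cast_natAbs, Int.cast_abs]
  linarith

lemma distZ_natAbs_round_mul_inv_le {x : ℝ} (hx : x ≠ 0) (q : ℕ) :
    distZ ((round (q * x)).natAbs * x⁻¹) ≤ distZ (q * x) / |x| := by
  rw [distZ_natAbs_mul]
  calc distZ (round (q * x) * x⁻¹) ≤ |round (q * x) * x⁻¹ - ((q : ℤ) : ℝ)| :=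
        distZ_le_abs_sub_intCast _ _
    _ = |(q * x - round (q * x)) / x| := by
        rw [← abs_neg]; congr 1; push_cast; field_simp; ring
    _ = distZ (q * x) / |x| := by rw [abs_div, distZ]

lemma eventually_log_inv_distZ_le_of_Bsup_lt {y G : ℝ} (h : Bsup y < ENNReal.ofReal G) :
    ∀ᶠ n : ℕ in atTop, log (distZ (n * y))⁻¹ ≤ G * n := by
  filter_upwards [eventually_lt_of_limsup_lt h, eventually_ge_atTop 1] with n hn hn1
  have hn0 : (0 : ℝ) < n := by exact_mod_cast hn1
  rw [← div_le_iff₀ hn0]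
  exact ((ENNReal.ofReal_lt_ofReal_iff'.mp hn).1).le

lemma Bsup_le_of_eventually_le_mul_add {y c C : ℝ} (hc : 0 ≤ c)
    (h : ∀ᶠ q : ℕ in atTop, log (distZ (q * y))⁻¹ ≤ c * q + C) :
    Bsup y ≤ ENNReal.ofReal c := by
  refine ENNReal.le_of_forall_pos_le_add fun ε hε _ => ?_
  rw [← ENNReal.ofReal_coe_nnreal, ← ENNReal.ofReal_add hc ε.coe_nonneg]
  have hεq : Tendsto (fun q : ℕ => (ε : ℝ) * q) atTop atTop :=
    tendsto_natCast_atTop_atTop.const_mul_atTop hε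
  refine limsup_le_of_le (by isBoundedDefault) ?_
  filter_upwards [h, eventually_ge_atTop 1, hεq.eventually_ge_atTop C] with q hq hq1 hCq
  have hq0 : (0 : ℝ) < q := by exact_mod_cast hq1
  refine ENNReal.ofReal_le_ofReal ((div_le_iff₀ hq0).mpr ?_)
  linarith

lemma Bsup_le_abs_mul_of_Bsup_inv_lt {x G : ℝ} (hx : Irrational x)
    (hG : Bsup x⁻¹ < ENNReal.ofReal G) : Bsup x ≤ ENNReal.ofReal (|x| * G) := by
  have hG0 : 0 ≤ G := ENNReal.ofReal_pos.mp (pos_of_gt hG) |>.le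
  have hx0 : 0 < |x| := abs_pos.mpr hx.ne_zero
  have hround : Tendsto (fun q : ℕ => (round (q * x)).natAbs) atTop atTop := by
    refine tendsto_natCast_atTop_iff.mp (tendsto_atTop_mono (fun q => ?_)
      (tendsto_atTop_add_const_right _ (-(1 / 2))
        (tendsto_natCast_atTop_atTop.atTop_mul_const hx0)))
    simpa [abs_mul, sub_eq_add_neg] using abs_sub_half_le_natAbs_round (q * x)
  refine Bsup_le_of_eventually_le_mul_add (mul_nonneg hx0.le hG0) (C := log |x|⁻¹ + G / 2) ?_
  filter_upwards [hround.eventually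
    ((eventually_log_inv_distZ_le_of_Bsup_lt hG).and (eventually_ge_atTop 1))] with q ⟨hq, hq1⟩
  set n := (round (q * x)).natAbs
  have hd : 0 < distZ (n * x⁻¹) := (hx.inv.natCast_mul (by omega)).distZ_pos
  have hdq : |x| * distZ (n * x⁻¹) ≤ distZ (q * x) := by
    have := distZ_natAbs_round_mul_inv_le hx.ne_zero q
    rwa [le_div_iff₀ hx0, mul_comm] at this
  have hn : (n : ℝ) ≤ q * |x| + 1 / 2 := by
    have := natAbs_round_le_abs_add_half (q * x)
    rwa [abs_mul, Nat.abs_cast] at this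
  calc log (distZ (q * x))⁻¹ ≤ log (|x|⁻¹ * (distZ (n * x⁻¹))⁻¹) := by
        rw [← mul_inv]
        have hxd : 0 < |x| * distZ (n * x⁻¹) := mul_pos hx0 hd
        exact log_le_log (inv_pos.mpr (hxd.trans_le hdq)) (inv_anti₀ hxd hdq)
    _ = log |x|⁻¹ + log (distZ (n * x⁻¹))⁻¹ :=
        log_mul (inv_ne_zero hx0.ne') (inv_ne_zero hd.ne')
    _ ≤ log |x|⁻¹ + G * (q * |x| + 1 / 2) := by gcongr; exact hq.trans (by gcongr)
    _ = |x| * G * q + (log |x|⁻¹ + G / 2) := by ring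

lemma Bsup_le_abs_mul_Bsup_inv {x : ℝ} (hx : Irrational x) :
    Bsup x ≤ ENNReal.ofReal |x| * Bsup x⁻¹ := by
  have hk0 : ENNReal.ofReal |x| ≠ 0 := by simpa using hx.ne_zero
  rw [← ENNReal.inv_mul_le_iff hk0 ENNReal.ofReal_ne_top]
  refine le_of_forall_gt_imp_ge_of_dense fun c hc => ?_
  rcases eq_or_ne c ⊤ with rfl | hc_top
  · exact le_top
  rw [ENNReal.inv_mul_le_iff hk0 ENNReal.ofReal_ne_top, ← ENNReal.ofReal_toReal hc_top,
    ← ENNReal.ofReal_mul (abs_nonneg x)]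
  exact Bsup_le_abs_mul_of_Bsup_inv_lt hx (by rwa [ENNReal.ofReal_toReal hc_top])

theorem stmt8_general (x : ℝ) (hx : Irrational x) :
    Bsup x = ENNReal.ofReal |x| * Bsup (1 / x) := by
  rw [one_div]
  refine le_antisymm (Bsup_le_abs_mul_Bsup_inv hx) ?_
  calc ENNReal.ofReal |x| * Bsup x⁻¹
      ≤ ENNReal.ofReal |x| * (ENNReal.ofReal |x⁻¹| * Bsup x⁻¹⁻¹) := by
        gcongr; exact Bsup_le_abs_mul_Bsup_inv hx.inv
    _ = Bsup x := by
        rw [inv_inv, ← mul_assoc, ← ENNReal.ofReal_mul (abs_nonneg x), ← abs_mul,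
          mul_inv_cancel₀ hx.ne_zero, abs_one, ENNReal.ofReal_one, one_mul]

/-- For irrational `x ≠ 0`, `B_sup(x) = |x| · B_sup(1/x)` (in `ℝ≥0∞`, so `∞·c = ∞` for
`c > 0`). -/
theorem stmt8 (x : ℝ) (hx : Irrational x) (hx0 : x ≠ 0) :
    Bsup x = ENNReal.ofReal |x| * Bsup (1 / x) :=
  stmt8_general x hx
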